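/- arXiv:2603.13197 — 7 statements merged into one kernel-verified Lean document; each statement's English description precedes it below -/
import Mathlib

section
/- Let X, A, R be nonempty finite sets, let q be a probability mass function on R, and let f : X × R → (A → [0,1]) be a family of conditional distributions, i.e. for every x ∈ X and r ∈ R we have ∑_{a ∈ A} f(x,r)(a) = 1. Define the network distribution p(a|x) = ∑_{r ∈ R} q(r)·f(x,r)(a). Then for every ε > 0 and every natural number n with n > ln(2|X||A|)/(2ε²), there exists a tuple of samples r⁽¹⁾, …, r⁽ⁿ⁾ ∈ R such that for all x ∈ X and a ∈ A, |p(a|x) − (1/n)·∑_{i=1}^{n} f(x, r⁽ⁱ⁾)(a)| < ε. In particular, the empirical source Q, uniform over the n samples, has cardinality at most n and reproduces p(a|x) up to ε in the infinity norm. -/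
/-!
Draw the samples `r⁽¹⁾, …, r⁽ⁿ⁾` independently from `q`. For each pair `(x, a)`, the values
`f x r⁽ⁱ⁾ a` are i.i.d. in `[0, 1]` with mean `p(a|x)`, so by Hoeffding's inequality the empirical
mean deviates from `p(a|x)` by at least `ε` with probability at most `2 exp (-2 n ε²)`. The bound on
`n` says exactly that `2 |X| |A| exp (-2 n ε²) < 1`, so by the union bound some sample avoids all
these events.
-/

open Real MeasureTheory ProbabilityTheory Finset
open scoped NNReal

namespace ProbabilityTheory.HasSubgaussianMGF

variable {S : Type*} [MeasurableSpace S] {ν : Measure S} [IsProbabilityMeasure ν]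
  {Z : S → ℝ} {c : ℝ≥0}

lemma measureReal_pi_sum_ge_le (hZ : HasSubgaussianMGF Z c ν) (n : ℕ) {ε : ℝ} (hε : 0 ≤ ε) :
    (Measure.pi fun _ : Fin n ↦ ν).real {ω | ε ≤ ∑ i, Z (ω i)} ≤
      exp (-ε ^ 2 / (2 * n * c)) := by
  have h_indep : iIndepFun (fun (i : Fin n) ω ↦ Z (ω i)) (Measure.pi fun _ ↦ ν) :=
    iIndepFun_pi fun _ ↦ hZ.aemeasurable
  have h_subG (i : Fin n) :
      HasSubgaussianMGF (fun ω : Fin n → S ↦ Z (ω i)) c (Measure.pi fun _ ↦ ν) := by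
    refine HasSubgaussianMGF.of_map (X := Z) (measurable_pi_apply i).aemeasurable ?_
    rwa [(measurePreserving_eval (fun _ ↦ ν) i).map_eq]
  simpa [mul_assoc] using
    measure_sum_ge_le_of_iIndepFun h_indep (s := univ) (fun i _ ↦ h_subG i) hε

lemma measureReal_pi_abs_sum_ge_le (hZ : HasSubgaussianMGF Z c ν) (n : ℕ) {ε : ℝ}
    (hε : 0 ≤ ε) :
    (Measure.pi fun _ : Fin n ↦ ν).real {ω | ε ≤ |∑ i, Z (ω i)|} ≤
      2 * exp (-ε ^ 2 / (2 * n * c)) := by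
  have h_split : {ω : Fin n → S | ε ≤ |∑ i, Z (ω i)|} =
      {ω | ε ≤ ∑ i, Z (ω i)} ∪ {ω | ε ≤ ∑ i, (-Z) (ω i)} := by
    ext ω
    simp [le_abs', sum_neg_distrib, le_neg, or_comm]
  rw [h_split, two_mul]
  exact (measureReal_union_le _ _).trans <|
    add_le_add (hZ.measureReal_pi_sum_ge_le n hε) (hZ.neg.measureReal_pi_sum_ge_le n hε)

end ProbabilityTheory.HasSubgaussianMGF

lemma measureReal_pi_abs_sum_sub_integral_ge_le {S : Type*} [MeasurableSpace S]
    {ν : Measure S} [IsProbabilityMeasure ν] {g : S → ℝ} {a b : ℝ} (hg : AEMeasurable g ν)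
    (hgab : ∀ᵐ s ∂ν, g s ∈ Set.Icc a b) (n : ℕ) {ε : ℝ} (hε : 0 ≤ ε) :
    (Measure.pi fun _ : Fin n ↦ ν).real {ω | n * ε ≤ |∑ i, (g (ω i) - ν[g])|} ≤
      2 * exp (-2 * n * ε ^ 2 / (b - a) ^ 2) := by
  refine ((hasSubgaussianMGF_of_mem_Icc hg hgab).measureReal_pi_abs_sum_ge_le n
    (mul_nonneg n.cast_nonneg hε)).trans_eq ?_
  congr 2
  push_cast
  rw [Real.norm_eq_abs, div_pow, sq_abs]
  rcases eq_or_ne (n : ℝ) 0 with hn | hn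
  · simp [hn]
  rcases eq_or_ne (b - a) 0 with hba | hba
  · simp [hba]
  field_simp

lemma exists_forall_notMem_of_sum_measureReal_lt_one {Ω ι : Type*} [MeasurableSpace Ω]
    {μ : Measure Ω} [IsProbabilityMeasure μ] [Fintype ι] (B : ι → Set Ω)
    (h : ∑ j, μ.real (B j) < 1) : ∃ ω, ∀ j, ω ∉ B j := by
  by_contra! h_cover
  have h_univ : (⋃ j, B j) = Set.univ :=
    Set.eq_univ_of_forall fun ω ↦ Set.mem_iUnion.2 (h_cover ω)
  have h_union := measureReal_iUnion_fintype_le (μ := μ) B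
  rw [h_univ, probReal_univ] at h_union
  linarith

lemma exists_forall_abs_sum_sub_integral_lt {S J : Type*} [MeasurableSpace S]
    {ν : Measure S} [IsProbabilityMeasure ν] [Fintype J] {g : J → S → ℝ}
    (hg : ∀ j, AEMeasurable (g j) ν) (hg01 : ∀ j, ∀ᵐ s ∂ν, g j s ∈ Set.Icc 0 1)
    {n : ℕ} {ε : ℝ} (hε : 0 ≤ ε) (h : 2 * Fintype.card J * exp (-2 * n * ε ^ 2) < 1) :
    ∃ ω : Fin n → S, ∀ j, |∑ i, (g j (ω i) - ν[g j])| < n * ε := by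
  obtain ⟨ω, hω⟩ := exists_forall_notMem_of_sum_measureReal_lt_one
    (μ := Measure.pi fun _ : Fin n ↦ ν)
    (fun j ↦ {ω | n * ε ≤ |∑ i, (g j (ω i) - ν[g j])|}) <| by
      calc _ ≤ ∑ _ : J, 2 * exp (-2 * n * ε ^ 2) := by
            gcongr with j
            simpa using measureReal_pi_abs_sum_sub_integral_ge_le (hg j) (hg01 j) n hε
        _ < 1 := by simpa [mul_assoc, mul_left_comm] using h
  exact ⟨ω, fun j ↦ not_le.1 (hω j)⟩

lemma mul_exp_neg_lt_one_of_log_lt {N t : ℝ} (hN : 0 ≤ N) (h : log N < t) :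
    N * exp (-t) < 1 := by
  rcases hN.eq_or_lt with rfl | hN
  · simp
  rw [exp_neg, ← div_eq_mul_inv, div_lt_one (exp_pos t)]
  exact (log_lt_iff_lt_exp hN).1 h

lemma abs_sub_one_div_mul_lt_of_abs_sub_mul_lt {s p ε n : ℝ} (hε : 0 ≤ ε)
    (h : |s - n * p| < n * ε) : |p - 1 / n * s| < ε := by
  have hn : 0 < n := pos_of_mul_pos_left ((abs_nonneg _).trans_lt h) hε
  have h_mean : 1 / n * s - p = (s - n * p) / n := by field_simp
  rw [abs_sub_comm, h_mean, abs_div, abs_of_pos hn, div_lt_iff₀ hn, mul_comm ε]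
  exact h

theorem stmt_0_general {X A R : Type*} [Fintype X] [Fintype A] [Fintype R]
    (q : R → ℝ) (hq0 : ∀ r, 0 ≤ q r) (hq1 : ∑ r, q r = 1)
    (f : X → R → A → ℝ)
    (hf0 : ∀ x r a, 0 ≤ f x r a) (hf1 : ∀ x r a, f x r a ≤ 1)
    (ε : ℝ) (hε : 0 < ε) (n : ℕ)
    (hn : (n : ℝ) > Real.log (2 * Fintype.card X * Fintype.card A) / (2 * ε ^ 2)) :
    ∃ s : Fin n → R, ∀ (x : X) (a : A),
      |(∑ r, q r * f x r a) - (1 / (n : ℝ)) * ∑ i, f x (s i) a| < ε := by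
  let _ : MeasurableSpace R := ⊤
  let ν : Measure R := (PMF.ofFintype (fun r ↦ ENNReal.ofReal (q r)) <| by
    rw [← ENNReal.ofReal_sum_of_nonneg fun r _ ↦ hq0 r, hq1, ENNReal.ofReal_one]).toMeasure
  have h_integral (g : R → ℝ) : ν[g] = ∑ r, q r * g r := by
    simp [ν, PMF.integral_eq_sum, ENNReal.toReal_ofReal (hq0 _)]
  have h_union_bound : 2 * Fintype.card (X × A) * exp (-2 * n * ε ^ 2) < 1 := by
    rw [neg_mul, neg_mul]
    refine mul_exp_neg_lt_one_of_log_lt (by positivity) ?_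
    rw [gt_iff_lt, div_lt_iff₀ (by positivity)] at hn
    push_cast [Fintype.card_prod, ← mul_assoc]
    linarith
  obtain ⟨s, hs⟩ := exists_forall_abs_sum_sub_integral_lt (ν := ν)
    (g := fun (xa : X × A) r ↦ f xa.1 r xa.2) (fun _ ↦ (measurable_of_finite _).aemeasurable)
    (fun _ ↦ ae_of_all _ fun _ ↦ ⟨hf0 _ _ _, hf1 _ _ _⟩) hε.le h_union_bound
  refine ⟨s, fun x a ↦ abs_sub_one_div_mul_lt_of_abs_sub_mul_lt hε.le ?_⟩
  simpa only [h_integral, sum_sub_distrib, sum_const, card_univ, Fintype.card_fin,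
    nsmul_eq_mul] using hs (x, a)

/-- compressing a single randomness source in a communication network.
Given a network distribution `p(a|x) = ∑ r, q r * f x r a`, for every `ε > 0` and
every natural number `n > ln(2|X||A|)/(2ε²)` there exist samples `r⁽¹⁾, …, r⁽ⁿ⁾ ∈ R`
whose empirical average reproduces `p(a|x)` up to `ε` for every `x` and `a`. -/
theorem stmt_0 {X A R : Type*} [Fintype X] [Fintype A] [Fintype R]
    [Nonempty X] [Nonempty A] [Nonempty R]
    (q : R → ℝ) (hq0 : ∀ r, 0 ≤ q r) (hq1 : ∑ r, q r = 1)
    (f : X → R → A → ℝ)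
    (hf0 : ∀ x r a, 0 ≤ f x r a) (hf1 : ∀ x r a, f x r a ≤ 1)
    (hfsum : ∀ x r, ∑ a, f x r a = 1)
    (ε : ℝ) (hε : 0 < ε) (n : ℕ)
    (hn : (n : ℝ) > Real.log (2 * Fintype.card X * Fintype.card A) / (2 * ε ^ 2)) :
    ∃ s : Fin n → R, ∀ (x : X) (a : A),
      |(∑ r, q r * f x r a) - (1 / (n : ℝ)) * ∑ i, f x (s i) a| < ε :=
  stmt_0_general q hq0 hq1 f hf0 hf1 ε hε n hn
end

section
/- Let X and A be nonempty finite sets, let m ≥ 1, let R₁, …, R_m be nonempty finite sets with probability mass functions q₁, …, q_m, and let f : X × (R₁ × ⋯ × R_m) → (A → [0,1]) satisfy ∑_{a ∈ A} f(x, r)(a) = 1 for all x and r. Define p(a|x) = ∑_{r₁,…,r_m} q₁(r₁)⋯q_m(r_m)·f(x,(r₁,…,r_m))(a). Then for every ε > 0, every choice of positive reals δ₁, …, δ_m with ∑_{i=1}^m δᵢ = 1, and every choice of natural numbers n₁, …, n_m with nᵢ > ln(2|X||A|)/(2(εδᵢ)²) for each i, there exist, for each i, tuples of samples rᵢ⁽¹⁾,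 …, rᵢ⁽ⁿⁱ⁾ ∈ Rᵢ such that the distribution p̂(a|x) = (1/(n₁⋯n_m))·∑_{j₁=1}^{n₁}⋯∑_{j_m=1}^{n_m} f(x,(r₁⁽ʲ¹⁾,…,r_m⁽ʲᵐ⁾))(a) satisfies |p̂(a|x) − p(a|x)| < ε for all x ∈ X and a ∈ A. -/
/-!
Compress the sources one at a time. Replacing the weights of a single source `i` by the
empirical weights of `nᵢ` independent samples changes `p(a|x)` into the sample mean of the
conditional distribution `ρ ↦ p(a|x, Rᵢ = ρ)`, a `[0,1]`-valued function. By Hoeffding's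
inequality and a union bound over the `|X||A|` pairs `(x, a)`, some sample tuple moves every
`p(a|x)` by less than `ε δᵢ` as soon as `2|X||A| e^{-2 nᵢ (ε δᵢ)²} < 1`, which is the bound on
`nᵢ`. The other sources may already be compressed, so the `m` steps chain and the errors add
up to `ε ∑ δᵢ = ε`.
-/

open MeasureTheory ProbabilityTheory Real Finset

section Hoeffding

variable {Ω : Type*} [MeasurableSpace Ω] (μ : Measure Ω) [IsProbabilityMeasure μ] {a b : ℝ}

lemma measureReal_le_sum_sub_integral_le {g : Ω → ℝ} (hg : Measurable g)
    (hab : ∀ ω, g ω ∈ Set.Icc a b) (n : ℕ) {ε : ℝ} (hε : 0 ≤ ε) :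
    (Measure.pi fun _ : Fin n => μ).real {τ | ε ≤ ∑ j, (g (τ j) - ∫ ω, g ω ∂μ)} ≤
      exp (-2 * ε ^ 2 / (n * (b - a) ^ 2)) := by
  have hindep : iIndepFun (fun j (τ : Fin n → Ω) => g (τ j) - ∫ ω, g ω ∂μ)
      (Measure.pi fun _ => μ) :=
    iIndepFun_pi (X := fun _ ω => g ω - ∫ ω, g ω ∂μ) fun _ => (hg.sub_const _).aemeasurable
  have hsubG : ∀ j, HasSubgaussianMGF (fun τ : Fin n → Ω => g (τ j) - ∫ ω, g ω ∂μ)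
      ((‖b - a‖₊ / 2) ^ 2) (Measure.pi fun _ => μ) := by
    intro j
    have := hasSubgaussianMGF_of_mem_Icc (μ := Measure.pi fun _ : Fin n => μ)
      (X := fun τ => g (τ j)) (hg.comp (measurable_pi_apply j)).aemeasurable
      (ae_of_all _ fun τ => hab (τ j))
    rwa [integral_comp_eval hg.aestronglyMeasurable] at this
  convert HasSubgaussianMGF.measure_sum_ge_le_of_iIndepFun hindep (s := univ)
    (fun j _ => hsubG j) hε using 2
  have hvar : ((∑ _j : Fin n, (‖b - a‖₊ / 2) ^ 2 : NNReal) : ℝ) = n * (b - a) ^ 2 / 4 := by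
    simp only [div_pow, sum_const, card_univ, Fintype.card_fin, nsmul_eq_mul, NNReal.coe_mul,
      NNReal.coe_natCast, NNReal.coe_div, NNReal.coe_pow, coe_nnnorm, norm_eq_abs, sq_abs,
      NNReal.coe_ofNat]
    ring
  rw [hvar]
  generalize (n : ℝ) * (b - a) ^ 2 = c
  ring

lemma measureReal_le_abs_sum_sub_integral_le {g : Ω → ℝ} (hg : Measurable g)
    (hab : ∀ ω, g ω ∈ Set.Icc a b) (n : ℕ) {ε : ℝ} (hε : 0 ≤ ε) :
    (Measure.pi fun _ : Fin n => μ).real {τ | ε ≤ |∑ j, (g (τ j) - ∫ ω, g ω ∂μ)|} ≤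
      2 * exp (-2 * ε ^ 2 / (n * (b - a) ^ 2)) := by
  have hupper := measureReal_le_sum_sub_integral_le μ hg hab n hε
  have hlower := measureReal_le_sum_sub_integral_le μ (g := fun ω => -g ω) hg.neg
    (fun ω => ⟨neg_le_neg (hab ω).2, neg_le_neg (hab ω).1⟩) n hε
  have hset : {τ : Fin n → Ω | ε ≤ |∑ j, (g (τ j) - ∫ ω, g ω ∂μ)|} =
      {τ | ε ≤ ∑ j, (g (τ j) - ∫ ω, g ω ∂μ)} ∪
        {τ | ε ≤ ∑ j, (-g (τ j) - ∫ ω, -g ω ∂μ)} := by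
    ext τ
    have hneg : ∑ j, (-g (τ j) - ∫ ω, -g ω ∂μ) = -∑ j, (g (τ j) - ∫ ω, g ω ∂μ) := by
      rw [integral_neg, ← sum_neg_distrib]
      simp only [neg_sub, sub_neg_eq_add, neg_add_eq_sub]
    simp only [Set.mem_ofPred_eq, Set.mem_union, le_abs, hneg]
  rw [hset]
  refine (measureReal_union_le _ _).trans ?_
  convert add_le_add hupper hlower using 1
  ring_nf

lemma exists_forall_abs_sum_div_sub_integral_lt {K : Type*} [Fintype K] {G : K → Ω → ℝ}
    (hG : ∀ k, Measurable (G k)) (hab : ∀ k ω, G k ω ∈ Set.Icc a b) {n : ℕ} {t : ℝ}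
    (ht : 0 ≤ t) (hn : 2 * Fintype.card K * exp (-2 * n * t ^ 2 / (b - a) ^ 2) < 1) :
    ∃ τ : Fin n → Ω, ∀ k, |(∑ j, G k (τ j)) / n - ∫ ω, G k ω ∂μ| < t := by
  by_contra! hbad
  have hscale : ∀ (τ : Fin n → Ω) k,
      |∑ j, (G k (τ j) - ∫ ω, G k ω ∂μ)| = n * |(∑ j, G k (τ j)) / n - ∫ ω, G k ω ∂μ| := by
    intro τ k
    rcases eq_or_ne n 0 with rfl | hn0
    · simp
    calc |∑ j, (G k (τ j) - ∫ ω, G k ω ∂μ)|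
        = |(n : ℝ) * ((∑ j, G k (τ j)) / n - ∫ ω, G k ω ∂μ)| := by
          rw [mul_sub, mul_div_cancel₀ _ (Nat.cast_ne_zero.2 hn0), sum_sub_distrib, sum_const,
            card_univ, Fintype.card_fin, nsmul_eq_mul]
      _ = n * |(∑ j, G k (τ j)) / n - ∫ ω, G k ω ∂μ| := by rw [abs_mul, Nat.abs_cast]
  have hcover : Set.univ ⊆
      ⋃ k, {τ : Fin n → Ω | n * t ≤ |∑ j, (G k (τ j) - ∫ ω, G k ω ∂μ)|} := by
    intro τ _
    obtain ⟨k, hk⟩ := hbad τ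
    refine Set.mem_iUnion.2 ⟨k, ?_⟩
    change n * t ≤ _
    rw [hscale τ k]
    exact mul_le_mul_of_nonneg_left hk n.cast_nonneg
  have hexp : -2 * (n * t) ^ 2 / (n * (b - a) ^ 2) = -2 * n * t ^ 2 / (b - a) ^ 2 := by
    rcases eq_or_ne n 0 with rfl | hn0
    · simp
    field_simp
  have := calc
    (1 : ℝ) = (Measure.pi fun _ : Fin n => μ).real Set.univ := probReal_univ.symm
    _ ≤ (Measure.pi fun _ : Fin n => μ).real
          (⋃ k, {τ | n * t ≤ |∑ j, (G k (τ j) - ∫ ω, G k ω ∂μ)|}) := measureReal_mono hcover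
    _ ≤ ∑ k, (Measure.pi fun _ : Fin n => μ).real
          {τ | n * t ≤ |∑ j, (G k (τ j) - ∫ ω, G k ω ∂μ)|} := measureReal_iUnion_fintype_le _
    _ ≤ ∑ _k : K, 2 * exp (-2 * n * t ^ 2 / (b - a) ^ 2) := sum_le_sum fun k _ => by
          simpa only [hexp] using measureReal_le_abs_sum_sub_integral_le μ (hG k) (hab k) n
            (mul_nonneg n.cast_nonneg ht)
    _ = 2 * Fintype.card K * exp (-2 * n * t ^ 2 / (b - a) ^ 2) := by
          rw [sum_const, card_univ, nsmul_eq_mul]; ring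
  linarith

end Hoeffding

lemma exists_isProbabilityMeasure_integral_eq_sum {Ω : Type*} [Fintype Ω] [MeasurableSpace Ω]
    [MeasurableSingletonClass Ω] {w : Ω → ℝ} (hw : w ∈ stdSimplex ℝ Ω) :
    ∃ μ : Measure Ω, IsProbabilityMeasure μ ∧ ∀ g : Ω → ℝ, ∫ ω, g ω ∂μ = ∑ ω, w ω * g ω := by
  have hsum : ∑ ω, ENNReal.ofReal (w ω) = 1 := by
    rw [← ENNReal.ofReal_sum_of_nonneg fun ω _ => hw.1 ω, hw.2, ENNReal.ofReal_one]
  refine ⟨(PMF.ofFintype _ hsum).toMeasure, inferInstance, fun g => ?_⟩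
  simp [PMF.integral_eq_sum, ENNReal.toReal_ofReal (hw.1 _)]

lemma exists_forall_abs_sum_div_sub_sum_mul_lt {Ω K : Type*} [Fintype Ω] [Fintype K]
    {w : Ω → ℝ} (hw : w ∈ stdSimplex ℝ Ω) {G : K → Ω → ℝ} {a b : ℝ}
    (hab : ∀ k ω, G k ω ∈ Set.Icc a b) {n : ℕ} {t : ℝ} (ht : 0 ≤ t)
    (hn : 2 * Fintype.card K * exp (-2 * n * t ^ 2 / (b - a) ^ 2) < 1) :
    ∃ τ : Fin n → Ω, ∀ k, |(∑ j, G k (τ j)) / n - ∑ ω, w ω * G k ω| < t := by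
  let _ : MeasurableSpace Ω := ⊤
  obtain ⟨μ, _, hμ⟩ := exists_isProbabilityMeasure_integral_eq_sum hw
  simpa only [hμ] using
    exists_forall_abs_sum_div_sub_integral_lt μ (fun _ => measurable_from_top) hab ht hn

section Empirical

variable {Ω : Type*} [DecidableEq Ω] {N : ℕ}

noncomputable def empiricalWeights (τ : Fin N → Ω) (ω : Ω) : ℝ :=
  (#{j | τ j = ω} : ℝ) / N

variable [Fintype Ω] (τ : Fin N → Ω)

lemma sum_empiricalWeights_mul (g : Ω → ℝ) :
    ∑ ω, empiricalWeights τ ω * g ω = (∑ j, g (τ j)) / N := by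
  simp only [empiricalWeights, div_mul_eq_mul_div, ← sum_div, natCast_card_filter, sum_mul,
    ite_mul, one_mul, zero_mul]
  rw [sum_comm]
  simp

lemma empiricalWeights_mem_stdSimplex (hN : 0 < N) : empiricalWeights τ ∈ stdSimplex ℝ Ω :=
  ⟨fun ω => by unfold empiricalWeights; positivity,
    by simpa [hN.ne'] using sum_empiricalWeights_mul τ 1⟩

end Empirical

lemma pos_of_one_le_of_mul_exp_lt_one {c t : ℝ} {N : ℕ} (hc : 1 ≤ c)
    (h : c * exp (-2 * N * t ^ 2) < 1) : 0 < N :=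
  Nat.pos_of_ne_zero fun h0 => by simp [h0] at h; linarith

section Hybrid

variable {ι : Type*} [DecidableEq ι] {R : ι → Type*} [∀ i, DecidableEq (R i)] {n : ι → ℕ}
  (q : (i : ι) → R i → ℝ)

noncomputable def hybridWeights (s : (i : ι) → Fin (n i) → R i) (S : Finset ι) (i : ι) :
    R i → ℝ :=
  if i ∈ S then empiricalWeights (s i) else q i

lemma hybridWeights_empty (s : (i : ι) → Fin (n i) → R i) : hybridWeights q s ∅ = q := by
  funext i
  simp [hybridWeights]

lemma hybridWeights_univ [Fintype ι] (s : (i : ι) → Fin (n i) → R i) :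
    hybridWeights q s univ = fun i => empiricalWeights (s i) := by
  funext i
  simp [hybridWeights]

lemma hybridWeights_cons (s : (i : ι) → Fin (n i) → R i) {S : Finset ι} {i : ι} (hi : i ∉ S)
    (τ : Fin (n i) → R i) :
    hybridWeights q (Function.update s i τ) (cons i S hi) =
      Function.update (hybridWeights q s S) i (empiricalWeights τ) := by
  funext j
  rcases eq_or_ne j i with rfl | hj
  · simp [hybridWeights]
  · simp [hybridWeights, hj]

variable {q} in
lemma hybridWeights_mem_stdSimplex [∀ i, Fintype (R i)] (hq : ∀ i, q i ∈ stdSimplex ℝ (R i))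
    (hn : ∀ i, 0 < n i) (s : (i : ι) → Fin (n i) → R i) (S : Finset ι) (i : ι) :
    hybridWeights q s S i ∈ stdSimplex ℝ (R i) := by
  by_cases hi : i ∈ S
  · simpa [hybridWeights, hi] using empiricalWeights_mem_stdSimplex (s i) (hn i)
  · simpa [hybridWeights, hi] using hq i

end Hybrid

section Network

variable {X A ι : Type*} [Fintype ι] [DecidableEq ι] {R : ι → Type*} [∀ i, Fintype (R i)]

noncomputable def networkDist (f : X → ((i : ι) → R i) → A → ℝ) (w : (i : ι) → R i → ℝ)
    (x : X) (a : A) : ℝ :=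
  ∑ r : (i : ι) → R i, (∏ i, w i (r i)) * f x r a

lemma networkDist_mem_Icc {f : X → ((i : ι) → R i) → A → ℝ}
    (hf : ∀ x r a, f x r a ∈ Set.Icc 0 1) {w : (i : ι) → R i → ℝ}
    (hw : ∀ i, w i ∈ stdSimplex ℝ (R i)) (x : X) (a : A) :
    networkDist f w x a ∈ Set.Icc 0 1 := by
  have hprod : ∀ r : (i : ι) → R i, 0 ≤ ∏ i, w i (r i) := fun r =>
    prod_nonneg fun i _ => (hw i).1 _
  refine ⟨sum_nonneg fun r _ => mul_nonneg (hprod r) (hf x r a).1, ?_⟩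
  calc networkDist f w x a ≤ ∑ r : (i : ι) → R i, ∏ i, w i (r i) :=
        sum_le_sum fun r _ => mul_le_of_le_one_right (hprod r) (hf x r a).2
    _ = 1 := by
        rw [← Fintype.prod_sum fun i ρ => w i ρ]
        exact prod_eq_one fun i _ => (hw i).2

variable [∀ i, DecidableEq (R i)]

lemma networkDist_update (f : X → ((i : ι) → R i) → A → ℝ) (w : (i : ι) → R i → ℝ) (i : ι)
    (u : R i → ℝ) (x : X) (a : A) :
    networkDist f (Function.update w i u) x a =
      ∑ ρ, u ρ * networkDist f (Function.update w i (Pi.single ρ 1)) x a := by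
  have hprod : ∀ (v : R i → ℝ) (r : (i : ι) → R i),
      ∏ j, Function.update w i v j (r j) = v (r i) * ∏ j ∈ univ.erase i, w j (r j) := by
    intro v r
    rw [← mul_prod_erase univ _ (mem_univ i), Function.update_self]
    congr 1
    exact prod_congr rfl fun j hj => by rw [Function.update_of_ne (ne_of_mem_erase hj)]
  simp only [networkDist, hprod, mul_assoc, mul_sum]
  rw [sum_comm]
  refine sum_congr rfl fun r _ => ?_
  simp [Pi.single_apply]

lemma networkDist_empiricalWeights (f : X → ((i : ι) → R i) → A → ℝ) {n : ι → ℕ}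
    (s : (i : ι) → Fin (n i) → R i) (x : X) (a : A) :
    networkDist f (fun i => empiricalWeights (s i)) x a =
      (∑ j : (i : ι) → Fin (n i), f x (fun i => s i (j i)) a) / ∏ i, (n i : ℝ) := by
  simp only [networkDist, empiricalWeights, prod_div_distrib, natCast_card_filter,
    Fintype.prod_sum, prod_boole, div_mul_eq_mul_div, ← sum_div, sum_mul, boole_mul]
  rw [sum_comm]
  congr 1
  refine sum_congr rfl fun j _ => ?_
  simp [← funext_iff]

variable [Fintype X] [Fintype A] {f : X → ((i : ι) → R i) → A → ℝ}

lemma exists_forall_abs_networkDist_update_empiricalWeights_sub_lt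
    (hf : ∀ x r a, f x r a ∈ Set.Icc 0 1) {w : (i : ι) → R i → ℝ}
    (hw : ∀ i, w i ∈ stdSimplex ℝ (R i)) (i : ι) {N : ℕ} {t : ℝ} (ht : 0 ≤ t)
    (hN : 2 * Fintype.card X * Fintype.card A * exp (-2 * N * t ^ 2) < 1) :
    ∃ τ : Fin N → R i, ∀ x a,
      |networkDist f (Function.update w i (empiricalWeights τ)) x a - networkDist f w x a| < t := by
  have hpoint : ∀ ρ j, Function.update w i (Pi.single ρ 1) j ∈ stdSimplex ℝ (R j) := by
    intro ρ j
    rcases eq_or_ne j i with rfl | hj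
    · simpa using single_mem_stdSimplex ℝ ρ
    · simpa [Function.update_of_ne hj] using hw j
  obtain ⟨τ, hτ⟩ := exists_forall_abs_sum_div_sub_sum_mul_lt (hw i)
    (G := fun (xa : X × A) ρ => networkDist f (Function.update w i (Pi.single ρ 1)) xa.1 xa.2)
    (fun xa ρ => networkDist_mem_Icc hf (hpoint ρ) xa.1 xa.2) ht
    (by simpa [Fintype.card_prod, mul_assoc] using hN)
  refine ⟨τ, fun x a => ?_⟩
  have hmean := networkDist_update f w i (w i) x a
  rw [Function.update_eq_self] at hmean
  rw [networkDist_update, sum_empiricalWeights_mul, hmean]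
  exact hτ (x, a)

lemma exists_forall_abs_networkDist_empiricalWeights_sub_lt [Nonempty X] [Nonempty A]
    [Nonempty ι] [∀ i, Nonempty (R i)] (hf : ∀ x r a, f x r a ∈ Set.Icc 0 1)
    {q : (i : ι) → R i → ℝ} (hq : ∀ i, q i ∈ stdSimplex ℝ (R i)) {n : ι → ℕ} {t : ι → ℝ}
    (ht : ∀ i, 0 ≤ t i)
    (hn : ∀ i, 2 * Fintype.card X * Fintype.card A * exp (-2 * n i * t i ^ 2) < 1) :
    ∃ s : (i : ι) → Fin (n i) → R i, ∀ x a,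
      |networkDist f (fun i => empiricalWeights (s i)) x a - networkDist f q x a| < ∑ i, t i := by
  have hc : (1 : ℝ) ≤ 2 * Fintype.card X * Fintype.card A := by
    norm_cast
    exact Nat.one_le_iff_ne_zero.2 (by positivity)
  have hweights :=
    hybridWeights_mem_stdSimplex hq fun i => pos_of_one_le_of_mul_exp_lt_one hc (hn i)
  have hstep : ∀ (s : (i : ι) → Fin (n i) → R i) S i (hi : i ∉ S), ∃ τ, ∀ x a,
      |networkDist f (hybridWeights q (Function.update s i τ) (cons i S hi)) x a -
        networkDist f (hybridWeights q s S) x a| < t i := by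
    intro s S i hi
    simp only [hybridWeights_cons]
    exact exists_forall_abs_networkDist_update_empiricalWeights_sub_lt hf (hweights s S) i
      (ht i) (hn i)
  suffices ∀ S : Finset ι, S.Nonempty → ∃ s : (i : ι) → Fin (n i) → R i, ∀ x a,
      |networkDist f (hybridWeights q s S) x a - networkDist f q x a| < ∑ i ∈ S, t i by
    simpa only [hybridWeights_univ] using this univ univ_nonempty
  intro S hS
  induction hS using Finset.Nonempty.cons_induction with
  | singleton i =>
    obtain ⟨τ, hτ⟩ := hstep (fun _ _ => Classical.arbitrary _) ∅ i (notMem_empty i)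
    exact ⟨_, by simpa only [hybridWeights_empty, cons_empty, sum_singleton] using hτ⟩
  | cons i S hi _ ih =>
    obtain ⟨s, hs⟩ := ih
    obtain ⟨τ, hτ⟩ := hstep s S i hi
    refine ⟨Function.update s i τ, fun x a => ?_⟩
    rw [sum_cons]
    exact (abs_sub_le _ _ _).trans_lt (add_lt_add (hτ x a) (hs x a))

end Network

lemma mul_exp_neg_lt_one_of_log_div_lt {c t x : ℝ} (hc : 0 < c) (ht : t ≠ 0)
    (h : log c / (2 * t ^ 2) < x) : c * exp (-2 * x * t ^ 2) < 1 := by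
  rw [div_lt_iff₀ (by positivity)] at h
  calc c * exp (-2 * x * t ^ 2) < exp (x * (2 * t ^ 2)) * exp (-2 * x * t ^ 2) :=
        mul_lt_mul_of_pos_right ((log_lt_iff_lt_exp hc).1 h) (exp_pos _)
    _ = 1 := by rw [← exp_add, ← exp_zero]; ring_nf

theorem stmt_1_general {X A : Type*} [Fintype X] [Fintype A] [Nonempty X] [Nonempty A]
    (m : ℕ) (hm : 1 ≤ m)
    (R : Fin m → Type*) [∀ i, Fintype (R i)] [∀ i, Nonempty (R i)]
    (q : (i : Fin m) → R i → ℝ)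
    (hq0 : ∀ i r, 0 ≤ q i r) (hq1 : ∀ i, ∑ r, q i r = 1)
    (f : X → ((i : Fin m) → R i) → A → ℝ)
    (hf0 : ∀ x r a, 0 ≤ f x r a) (hf1 : ∀ x r a, f x r a ≤ 1)
    (ε : ℝ) (hε : 0 < ε)
    (δ : Fin m → ℝ) (hδ : ∀ i, 0 < δ i) (hδ1 : ∑ i, δ i = 1)
    (n : Fin m → ℕ)
    (hn : ∀ i, (n i : ℝ) >
      Real.log (2 * Fintype.card X * Fintype.card A) / (2 * (ε * δ i) ^ 2)) :
    ∃ s : (i : Fin m) → Fin (n i) → R i, ∀ (x : X) (a : A),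
      |(1 / ∏ i, (n i : ℝ)) *
          (∑ j : (i : Fin m) → Fin (n i), f x (fun i => s i (j i)) a) -
        (∑ r : (i : Fin m) → R i, (∏ i, q i (r i)) * f x r a)| < ε := by
  classical
  have : Nonempty (Fin m) := ⟨⟨0, hm⟩⟩
  obtain ⟨s, hs⟩ := exists_forall_abs_networkDist_empiricalWeights_sub_lt
    (fun x r a => ⟨hf0 x r a, hf1 x r a⟩) (fun i => ⟨hq0 i, hq1 i⟩) (t := fun i => ε * δ i)
    (fun i => (mul_pos hε (hδ i)).le)
    (fun i => mul_exp_neg_lt_one_of_log_div_lt (by positivity) (mul_pos hε (hδ i)).ne' (hn i))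
  refine ⟨s, fun x a => ?_⟩
  have h := hs x a
  rwa [networkDist_empiricalWeights, ← mul_sum, hδ1, mul_one, ← one_div_mul_eq_div] at h

/-- compressing `m` independent randomness sources in succession.
Given the network distribution `p(a|x) = ∑ r, (∏ i, qᵢ(rᵢ)) * f x r a`, for every
`ε > 0`, positive reals `δ₁,…,δ_m` summing to `1`, and naturals `nᵢ > ln(2|X||A|)/(2(εδᵢ)²)`,
there exist sample tuples for each source whose joint empirical average reproduces
`p(a|x)` up to `ε`. -/
theorem stmt_1 {X A : Type*} [Fintype X] [Fintype A] [Nonempty X] [Nonempty A]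
    (m : ℕ) (hm : 1 ≤ m)
    (R : Fin m → Type*) [∀ i, Fintype (R i)] [∀ i, Nonempty (R i)]
    (q : (i : Fin m) → R i → ℝ)
    (hq0 : ∀ i r, 0 ≤ q i r) (hq1 : ∀ i, ∑ r, q i r = 1)
    (f : X → ((i : Fin m) → R i) → A → ℝ)
    (hf0 : ∀ x r a, 0 ≤ f x r a) (hf1 : ∀ x r a, f x r a ≤ 1)
    (hfsum : ∀ x r, ∑ a, f x r a = 1)
    (ε : ℝ) (hε : 0 < ε)
    (δ : Fin m → ℝ) (hδ : ∀ i, 0 < δ i) (hδ1 : ∑ i, δ i = 1)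
    (n : Fin m → ℕ)
    (hn : ∀ i, (n i : ℝ) >
      Real.log (2 * Fintype.card X * Fintype.card A) / (2 * (ε * δ i) ^ 2)) :
    ∃ s : (i : Fin m) → Fin (n i) → R i, ∀ (x : X) (a : A),
      |(1 / ∏ i, (n i : ℝ)) *
          (∑ j : (i : Fin m) → Fin (n i), f x (fun i => s i (j i)) a) -
        (∑ r : (i : Fin m) → R i, (∏ i, q i (r i)) * f x r a)| < ε :=
  stmt_1_general m hm R q hq0 hq1 f hf0 hf1 ε hε δ hδ hδ1 n hn
end

section
/- Let h ≥ 2, let A be a finite set, let R be a finite set with probability mass function p, and for each party i ∈ {1,…,h} let p_{A_i} : R → (A → [0,1]) be a strategy with ∑_{a ∈ A} p_{A_i}(r)(a) = 1 for all r. Suppose the generated distribution ∑_{r ∈ R} p(r)·p_{A_1}(r)(a₁)⋯p_{A_h}(r)(a_h) equals 𝟙[a₁ = a₂ = ⋯ = a_h]·q(a₁) for some probability mass function q on A. Then the strategy p_{A_1} is deterministic: for every r with p(r) > 0 there exists a ∈ A such that p_{A_1}(r)(a) = 1. -/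
open Finset

lemma exists_pos_of_sum_eq_one {α : Type*} [Fintype α] {f : α → ℝ} (hf0 : ∀ a, 0 ≤ f a)
    (hf1 : ∑ a, f a = 1) : ∃ a, 0 < f a := by
  obtain ⟨a, -, ha⟩ := exists_ne_zero_of_sum_ne_zero (hf1.trans_ne one_ne_zero)
  exact ⟨a, (hf0 a).lt_of_ne' ha⟩

lemma apply_eq_one_of_pos_imp_eq {α : Type*} [Fintype α] {f : α → ℝ} (hf0 : ∀ a, 0 ≤ f a)
    (hf1 : ∑ a, f a = 1) {b : α} (hb : ∀ a, 0 < f a → a = b) : f b = 1 := by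
  rw [← hf1, sum_eq_single b (fun a _ hab => ?_) (by simp)]
  exact ((hf0 a).eq_or_lt.resolve_right fun ha => hab (hb a ha)).symm

section LocalModel

variable {ι A R : Type*} [Fintype ι] [Fintype R] {p : R → ℝ} {pA : ι → R → A → ℝ}

lemma sum_mul_prod_pos (hp0 : ∀ r, 0 ≤ p r) (hpA0 : ∀ i r a, 0 ≤ pA i r a) {r : R}
    (hr : 0 < p r) {t : ι → A} (ht : ∀ i, 0 < pA i r (t i)) :
    0 < ∑ r, p r * ∏ i, pA i r (t i) :=
  sum_pos' (fun r' _ => mul_nonneg (hp0 r') (prod_nonneg fun i _ => hpA0 i r' _))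
    ⟨r, mem_univ r, mul_pos hr (prod_pos fun i _ => ht i)⟩

/-- Pick an answer `c k` of positive weight for every party at `r`; if party `i` also gave weight
to some `a ≠ c j`, the tuple `c` with `a` in place `i` would carry off-diagonal mass. -/
theorem exists_apply_eq_one_of_offDiag_eq_zero [Fintype A] [DecidableEq ι] {i j : ι} (hij : i ≠ j)
    (hp0 : ∀ r, 0 ≤ p r) (hpA0 : ∀ i r a, 0 ≤ pA i r a) (hpAsum : ∀ i r, ∑ a, pA i r a = 1)
    (hoff : ∀ t : ι → A, t i ≠ t j → ∑ r, p r * ∏ k, pA k r (t k) = 0)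
    {r : R} (hr : 0 < p r) : ∃ a, pA i r a = 1 := by
  choose c hc using fun k => exists_pos_of_sum_eq_one (hpA0 k r) (hpAsum k r)
  refine ⟨c j, apply_eq_one_of_pos_imp_eq (hpA0 i r) (hpAsum i r) fun a ha => ?_⟩
  have hpos : ∀ k, 0 < pA k r (Function.update c i a k) := by
    intro k
    rcases eq_or_ne k i with rfl | hki
    · simpa using ha
    · simpa [hki] using hc k
  by_contra hne
  refine (sum_mul_prod_pos hp0 hpA0 hr hpos).ne' (hoff _ ?_)
  simpa [hij.symm] using hne

end LocalModel

/-- in the no-input multipartite Bell scenario, if the shared-randomness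
strategies generate the perfectly correlated distribution `𝟙[a₁ = ⋯ = a_h]·q(a₁)`,
then party 1's strategy is deterministic on the support of `p`. -/
theorem stmt_3 {A R : Type*} [Fintype A] [Fintype R] [DecidableEq A]
    (h : ℕ) (hh : 2 ≤ h)
    (p : R → ℝ) (hp0 : ∀ r, 0 ≤ p r)
    (q : A → ℝ)
    (pA : Fin h → R → A → ℝ)
    (hpA0 : ∀ i r a, 0 ≤ pA i r a)
    (hpAsum : ∀ i r, ∑ a, pA i r a = 1)
    (hgen : ∀ a : Fin h → A,
      ∑ r, p r * ∏ i, pA i r (a i) =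
        if ∀ i, a i = a ⟨0, by omega⟩ then q (a ⟨0, by omega⟩) else 0) :
    ∀ r, 0 < p r → ∃ a : A, pA ⟨0, by omega⟩ r a = 1 := by
  intro r hr
  have h01 : (⟨0, by omega⟩ : Fin h) ≠ ⟨1, by omega⟩ := by simp [Fin.ext_iff]
  refine exists_apply_eq_one_of_offDiag_eq_zero h01 hp0 hpA0 hpAsum (fun t ht => ?_) hr
  rw [hgen, if_neg]
  exact fun hconst => ht (hconst _ ▸ (hconst _).symm)
end

section
/- Let X be a nonempty finite set, let R be a finite set with probability mass function p, and let p_A, p_B : X × R → ({0,1} → [0,1]) be strategies with ∑_{a ∈ {0,1}} p_A(x,r)(a) = 1 and ∑_{a ∈ {0,1}} p_B(x,r)(a) = 1 for all x, r. Suppose that for all x₁, x₂ ∈ X and a₁, a₂ ∈ {0,1}, ∑_{r ∈ R} p(r)·p_A(x₁,r)(a₁)·p_B(x₂,r)(a₂) equals 1/2 if a₁ = a₂ and x₁ = x₂, equals 0 if a₁ ≠ a₂ and x₁ = x₂, and equals 1/4 if x₁ ≠ x₂. Then the strategy p_A is deterministic: for every x ∈ X and every r with p(r) > 0 there exists a ∈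 {0,1} such that p_A(x,r)(a) = 1. -/
/-! On the diagonal `x₁ = x₂` the outputs never disagree, so for every `r` in the support of `p`
the products `p_A(x,r)(a) · p_B(x,r)(b)` vanish for `a ≠ b`. Bob's local distribution has some
outcome `b` of nonzero weight, which forces Alice to put no weight on any `a ≠ b`; hence she
outputs `b` with probability one. -/

theorem exists_eq_one_of_mul_eq_zero_of_ne {ι M : Type*} [Fintype ι] [Semiring M]
    [NoZeroDivisors M] [Nontrivial M] {q s : ι → M}
    (hq : ∑ i, q i = 1) (hs : ∑ i, s i = 1) (h : ∀ i j, i ≠ j → q i * s j = 0) :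
    ∃ i, q i = 1 := by
  obtain ⟨j, hj⟩ : ∃ j, s j ≠ 0 := by
    by_contra! hzero
    simp [hzero] at hs
  refine ⟨j, ?_⟩
  rw [← hq, Finset.sum_eq_single j]
  · exact fun i _ hij => (mul_eq_zero.mp (h i j hij)).resolve_right hj
  · simp

theorem stmt_7_general {X R : Type*} [DecidableEq X] [Fintype R]
    (p : R → ℝ) (hp0 : ∀ r, 0 ≤ p r)
    (pA pB : X → R → Bool → ℝ)
    (hpA0 : ∀ x r a, 0 ≤ pA x r a)
    (hpB0 : ∀ x r a, 0 ≤ pB x r a)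
    (hpAsum : ∀ x r, ∑ a, pA x r a = 1) (hpBsum : ∀ x r, ∑ a, pB x r a = 1)
    (hgen : ∀ (x₁ x₂ : X) (a₁ a₂ : Bool),
      ∑ r, p r * pA x₁ r a₁ * pB x₂ r a₂ =
        if x₁ = x₂ then (if a₁ = a₂ then 1 / 2 else 0) else 1 / 4) :
    ∀ (x : X) (r : R), 0 < p r → ∃ a : Bool, pA x r a = 1 := by
  intro x r hr
  have hdisagree : ∀ a b, a ≠ b → pA x r a * pB x r b = 0 := by
    intro a b hab
    have hsum := hgen x x a b
    rw [if_pos rfl, if_neg hab] at hsum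
    have hterm := (Finset.sum_eq_zero_iff_of_nonneg fun i _ =>
      mul_nonneg (mul_nonneg (hp0 i) (hpA0 x i a)) (hpB0 x i b)).mp hsum r (Finset.mem_univ r)
    rw [mul_assoc] at hterm
    exact (mul_eq_zero.mp hterm).resolve_left hr.ne'
  exact exists_eq_one_of_mul_eq_zero_of_ne (hpAsum x r) (hpBsum x r) hdisagree

/-- in the two-party Bell scenario with common input set `X` and binary
outputs, if the shared-randomness strategies generate the distribution that is
`1/2` when `a₁ = a₂, x₁ = x₂`, `0` when `a₁ ≠ a₂, x₁ = x₂`, and `1/4` when `x₁ ≠ x₂`,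
then Alice's strategy is deterministic on the support of `p`. -/
theorem stmt_7 {X R : Type*} [Fintype X] [Nonempty X] [DecidableEq X] [Fintype R]
    (p : R → ℝ) (hp0 : ∀ r, 0 ≤ p r) (hp1 : ∑ r, p r = 1)
    (pA pB : X → R → Bool → ℝ)
    (hpA0 : ∀ x r a, 0 ≤ pA x r a) (hpA1 : ∀ x r a, pA x r a ≤ 1)
    (hpB0 : ∀ x r a, 0 ≤ pB x r a) (hpB1 : ∀ x r a, pB x r a ≤ 1)
    (hpAsum : ∀ x r, ∑ a, pA x r a = 1) (hpBsum : ∀ x r, ∑ a, pB x r a = 1)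
    (hgen : ∀ (x₁ x₂ : X) (a₁ a₂ : Bool),
      ∑ r, p r * pA x₁ r a₁ * pB x₂ r a₂ =
        if x₁ = x₂ then (if a₁ = a₂ then 1 / 2 else 0) else 1 / 4) :
    ∀ (x : X) (r : R), 0 < p r → ∃ a : Bool, pA x r a = 1 :=
  stmt_7_general p hp0 pA pB hpA0 hpB0 hpAsum hpBsum hgen
end

section
/- Let X be a nonempty finite set, let R be a finite set with probability mass function p, and let strategies p_A, p_B : X × R → ({0,1} → [0,1]) with ∑_{a} p_A(x,r)(a) = 1 and ∑_{a} p_B(x,r)(a) = 1 generate the distribution p(a₁,a₂ | x₁,x₂) = ∑_{r} p(r)·p_A(x₁,r)(a₁)·p_B(x₂,r)(a₂) which equals 1/2 if a₁ = a₂ and x₁ = x₂, equals 0 if a₁ ≠ a₂ and x₁ = x₂, and equals 1/4 if x₁ ≠ x₂. Then |R| ≥ |{r : p(r) > 0}| ≥ |X| + 1; that is, shared randomness of cardinality at least |X| + 1 is necessary to generate this distribution exactly. -/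
/-!
Put `a x r = p_A(x,r)(1) - p_A(x,r)(0)` and `b x r = p_B(x,r)(1) - p_B(x,r)(0)`, both in `[-1, 1]`.
The target distribution says that under `p` every `a x` has mean zero and that the correlation
of `a x` with `b y` is `δ x y`. A correlation `1` between `[-1, 1]`-valued functions forces
`a x = b x` on the support of `p`, so `1` and the `a x` are orthonormal for the inner product
weighted by `p`. They are therefore `|X| + 1` linearly independent functions on the support.
-/

open Finset

theorem card_le_card_support_of_weighted_orthonormal {ι R : Type*} [Fintype ι] [Fintype R]
    [DecidableEq ι] (w : R → ℝ) (v : ι → R → ℝ)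
    (hv : ∀ i j, ∑ r, w r * v i r * v j r = if i = j then 1 else 0) :
    Fintype.card ι ≤ #{r | w r ≠ 0} := by
  set S : Finset R := {r | w r ≠ 0}
  have hli : LinearIndependent ℝ fun i (s : S) => v i s := by
    rw [Fintype.linearIndependent_iff]
    intro c hc j
    have hcomb : ∀ r, w r ≠ 0 → ∑ i, c i * v i r = 0 := fun r hr => by
      simpa using congrFun hc ⟨r, by simpa [S] using hr⟩
    calc c j = ∑ i, c i * ∑ r, w r * v i r * v j r := by simp [hv]
      _ = ∑ r, w r * (∑ i, c i * v i r) * v j r := by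
        simp only [mul_sum, sum_mul]
        rw [sum_comm]
        exact sum_congr rfl fun _ _ => sum_congr rfl fun _ _ => by ring
      _ = 0 := sum_eq_zero fun r _ => by
        by_cases hr : w r = 0
        · simp [hr]
        · simp [hcomb r hr]
  simpa [Module.finrank_fintype_fun_eq_card] using hli.fintype_card_le_finrank

theorem eq_of_weighted_sum_mul_eq_one {R : Type*} [Fintype R] {p a b : R → ℝ}
    (hp0 : ∀ r, 0 ≤ p r) (hp1 : ∑ r, p r = 1) (ha : ∀ r, |a r| ≤ 1) (hb : ∀ r, |b r| ≤ 1)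
    (hab : ∑ r, p r * a r * b r = 1) {r : R} (hr : p r ≠ 0) : a r = b r := by
  have hle : ∀ s, a s * b s ≤ 1 := fun s =>
    (le_abs_self _).trans (by rw [abs_mul]; exact mul_le_one₀ (ha s) (abs_nonneg _) (hb s))
  have hdefect : ∑ s, p s * (1 - a s * b s) = 0 := by
    simp only [mul_sub, mul_one, sum_sub_distrib, ← mul_assoc, hp1, hab, sub_self]
  have hterm := (sum_eq_zero_iff_of_nonneg fun s _ =>
    mul_nonneg (hp0 s) (sub_nonneg.mpr (hle s))).mp hdefect r (mem_univ r)
  have hone : a r * b r = 1 := by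
    linarith [(mul_eq_zero.mp hterm).resolve_left hr]
  obtain ⟨ha₁, ha₂⟩ := abs_le.mp (ha r)
  obtain ⟨hb₁, hb₂⟩ := abs_le.mp (hb r)
  nlinarith [sq_nonneg (a r - b r)]

theorem card_add_one_le_card_support_of_perfect_correlation {X R : Type*} [Fintype X]
    [DecidableEq X] [Fintype R] {p : R → ℝ} {a b : X → R → ℝ}
    (hp0 : ∀ r, 0 ≤ p r) (hp1 : ∑ r, p r = 1)
    (ha : ∀ x r, |a x r| ≤ 1) (hb : ∀ x r, |b x r| ≤ 1)
    (hmean : ∀ x, ∑ r, p r * a x r = 0)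
    (hcorr : ∀ x y, ∑ r, p r * a x r * b y r = if x = y then 1 else 0) :
    Fintype.card X + 1 ≤ #{r | p r ≠ 0} := by
  have hab : ∀ x r, p r ≠ 0 → a x r = b x r := fun x r =>
    eq_of_weighted_sum_mul_eq_one hp0 hp1 (ha x) (hb x) (by simpa using hcorr x x)
  have hgram : ∀ x y, ∑ r, p r * a x r * a y r = if x = y then 1 else 0 := by
    intro x y
    rw [← hcorr x y]
    refine sum_congr rfl fun r _ => ?_
    by_cases hr : p r = 0
    · simp [hr]
    · rw [hab y r hr]
  simpa using card_le_card_support_of_weighted_orthonormal p (fun i => Option.elim i 1 a)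
    (by rintro (_ | x) (_ | y) <;> simp [hp1, hmean, hgram])

section Bell

variable {X R : Type*} [DecidableEq X] [Fintype R] {p : R → ℝ}
  {pA pB : X → R → Bool → ℝ}
  (hgen : ∀ (x₁ x₂ : X) (a₁ a₂ : Bool),
    ∑ r, p r * pA x₁ r a₁ * pB x₂ r a₂ =
      if x₁ = x₂ then (if a₁ = a₂ then 1 / 2 else 0) else 1 / 4)
include hgen

theorem bell_mean_eq_zero (hpBsum : ∀ x r, ∑ a, pB x r a = 1) (x : X) :
    ∑ r, p r * (pA x r true - pA x r false) = 0 := by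
  calc ∑ r, p r * (pA x r true - pA x r false)
      = ∑ r, p r * (pA x r true - pA x r false) * (pB x r true + pB x r false) := by
        refine sum_congr rfl fun r _ => ?_
        rw [← Fintype.sum_bool, hpBsum, mul_one]
    _ = 0 := by
        simp only [mul_add, mul_sub, sub_mul, sum_add_distrib, sum_sub_distrib, hgen]
        norm_num

theorem bell_correlation_eq (x y : X) :
    ∑ r, p r * (pA x r true - pA x r false) * (pB y r true - pB y r false) =
      if x = y then 1 else 0 := by
  simp only [mul_sub, sub_mul, sum_sub_distrib, hgen]
  by_cases h : x = y <;> norm_num [h]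

end Bell

theorem stmt_8_general {X R : Type*} [Fintype X] [DecidableEq X] [Fintype R]
    (p : R → ℝ) (hp0 : ∀ r, 0 ≤ p r) (hp1 : ∑ r, p r = 1)
    (pA pB : X → R → Bool → ℝ)
    (hpA0 : ∀ x r a, 0 ≤ pA x r a) (hpA1 : ∀ x r a, pA x r a ≤ 1)
    (hpB0 : ∀ x r a, 0 ≤ pB x r a) (hpB1 : ∀ x r a, pB x r a ≤ 1)
    (hpBsum : ∀ x r, ∑ a, pB x r a = 1)
    (hgen : ∀ (x₁ x₂ : X) (a₁ a₂ : Bool),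
      ∑ r, p r * pA x₁ r a₁ * pB x₂ r a₂ =
        if x₁ = x₂ then (if a₁ = a₂ then 1 / 2 else 0) else 1 / 4) :
    Fintype.card R ≥ (Finset.univ.filter fun r : R => 0 < p r).card ∧
      (Finset.univ.filter fun r : R => 0 < p r).card ≥ Fintype.card X + 1 := by
  have hsupport : (Finset.univ.filter fun r : R => 0 < p r) = ({r | p r ≠ 0} : Finset R) :=
    filter_congr fun r _ => (hp0 r).lt_iff_ne'
  refine ⟨card_le_univ _, hsupport ▸ ?_⟩
  exact card_add_one_le_card_support_of_perfect_correlation hp0 hp1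
    (fun x r => abs_sub_le_of_nonneg_of_le (hpA0 x r _) (hpA1 x r _) (hpA0 x r _) (hpA1 x r _))
    (fun x r => abs_sub_le_of_nonneg_of_le (hpB0 x r _) (hpB1 x r _) (hpB0 x r _) (hpB1 x r _))
    (bell_mean_eq_zero hgen hpBsum) (bell_correlation_eq hgen)

/-- in the two-party Bell scenario with common input set `X` and binary
outputs, exactly generating the distribution that is `1/2` when `a₁ = a₂, x₁ = x₂`,
`0` when `a₁ ≠ a₂, x₁ = x₂`, and `1/4` when `x₁ ≠ x₂` requires
`|R| ≥ |{r : p(r) > 0}| ≥ |X| + 1`. -/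
theorem stmt_8 {X R : Type*} [Fintype X] [Nonempty X] [DecidableEq X] [Fintype R]
    (p : R → ℝ) (hp0 : ∀ r, 0 ≤ p r) (hp1 : ∑ r, p r = 1)
    (pA pB : X → R → Bool → ℝ)
    (hpA0 : ∀ x r a, 0 ≤ pA x r a) (hpA1 : ∀ x r a, pA x r a ≤ 1)
    (hpB0 : ∀ x r a, 0 ≤ pB x r a) (hpB1 : ∀ x r a, pB x r a ≤ 1)
    (hpAsum : ∀ x r, ∑ a, pA x r a = 1) (hpBsum : ∀ x r, ∑ a, pB x r a = 1)
    (hgen : ∀ (x₁ x₂ : X) (a₁ a₂ : Bool),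
      ∑ r, p r * pA x₁ r a₁ * pB x₂ r a₂ =
        if x₁ = x₂ then (if a₁ = a₂ then 1 / 2 else 0) else 1 / 4) :
    Fintype.card R ≥ (Finset.univ.filter fun r : R => 0 < p r).card ∧
      (Finset.univ.filter fun r : R => 0 < p r).card ≥ Fintype.card X + 1 :=
  stmt_8_general p hp0 hp1 pA pB hpA0 hpA1 hpB0 hpB1 hpBsum hgen
end

section
/- Let X be a nonempty finite set and let k = ⌈log₂(|X| + 1)⌉, so that |X| ≤ 2^k − 1. Let the shared randomness be a uniformly random bit string b ∈ {0,1}^k (a randomness source of cardinality 2^k), fix an injection x ↦ S_x from X into the nonempty subsets of {1,…,k}, and let both parties, on input x and shared string b, deterministically output ⊕_{i ∈ S_x} b_i (the XOR of the bits indexed by S_x). Then the generated distribution p(a₁,a₂ | x₁,x₂) = (1/2^k)·∑_{b ∈ {0,1}^k} 𝟙[a₁ = ⊕_{i ∈ S_{x₁}} b_i]·𝟙[a₂ = ⊕_{i ∈ S_{x₂}} b_i] equals 1/2 if a₁ = a₂ and x₁ = x₂, equals 0 if a₁ ≠ a₂ and x₁ = x₂, and equals 1/4 if x₁ ≠ x₂.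 Hence a shared randomness source of cardinality 2^{⌈log₂(|X|+1)⌉} suffices to generate this distribution exactly. -/
/-!
For a nonempty `T ⊆ ι`, the parity `b ↦ ∑ i ∈ T, b i` is a surjective group homomorphism
`(ι → ZMod 2) → ZMod 2`, so each value is attained by exactly half of the strings `b`.
For nonempty `T₁ ≠ T₂` some `e` has parities `(1, 0)` on `(T₁, T₂)` and some has `(0, 1)`,
so the pair of parities is a surjective homomorphism onto `(ZMod 2)²` and each of the four
value pairs is attained by a quarter of the strings.
-/

open Finset Function

theorem AddMonoidHom.card_mul_card_fiber_of_surjective {G M : Type*} [AddGroup G] [Fintype G]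
    [AddMonoid M] [Fintype M] [DecidableEq M] (f : G →+ M) (hf : Surjective f) (y : M) :
    Fintype.card M * #{g | f g = y} = Fintype.card G := by
  calc Fintype.card M * #{g | f g = y} = ∑ y' : M, #{g | f g = y'} := by
        rw [sum_congr rfl fun y' _ => card_fiber_eq_of_mem_range f (hf y') (hf y)]
        simp
    _ = Fintype.card G := (card_eq_sum_card_fiberwise fun g _ => mem_univ (f g)).symm

theorem card_le_two_pow_sub_one_of_injective {X ι : Type*} [Fintype X] [Fintype ι]
    [DecidableEq ι] {S : X → Finset ι} (hS : Injective S) (hne : ∀ x, (S x).Nonempty) :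
    Fintype.card X ≤ 2 ^ Fintype.card ι - 1 :=
  calc Fintype.card X ≤ #((univ : Finset (Finset ι)).erase ∅) :=
        card_le_card_of_injOn S (fun x _ => mem_erase.2 ⟨(hne x).ne_empty, mem_univ _⟩)
          hS.injOn
    _ = 2 ^ Fintype.card ι - 1 := by
        rw [card_erase_of_mem (mem_univ _), card_univ, Fintype.card_finset]

section CoordSum

variable {ι R : Type*}

def coordSumHom [AddCommMonoid R] (T : Finset ι) : (ι → R) →+ R where
  toFun b := ∑ i ∈ T, b i
  map_zero' := sum_const_zero
  map_add' _ _ := sum_add_distrib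

theorem coordSumHom_apply [AddCommMonoid R] (T : Finset ι) (b : ι → R) :
    coordSumHom T b = ∑ i ∈ T, b i := rfl

variable [DecidableEq ι]

theorem coordSumHom_surjective [AddCommMonoid R] {T : Finset ι} (hT : T.Nonempty) :
    Surjective (coordSumHom T : (ι → R) →+ R) := by
  obtain ⟨i, hi⟩ := hT
  exact fun r => ⟨Pi.single i r, by simp [coordSumHom_apply, sum_pi_single', hi]⟩

theorem exists_coordSumHom_eq_one_and_eq_zero [Ring R] {T₁ T₂ : Finset ι} (h₁ : T₁.Nonempty)
    (hne : T₁ ≠ T₂) : ∃ e : ι → R, coordSumHom T₁ e = 1 ∧ coordSumHom T₂ e = 0 := by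
  by_cases hsub : T₁ ⊆ T₂
  · obtain ⟨j, hj₂, hj₁⟩ := exists_of_ssubset (hsub.ssubset_of_ne hne)
    obtain ⟨i, hi⟩ := h₁
    exact ⟨Pi.single i 1 - Pi.single j 1, by
      simp [coordSumHom_apply, sum_sub_distrib, sum_pi_single', hi, hj₁, hj₂, hsub hi]⟩
  · obtain ⟨i, hi₁, hi₂⟩ := not_subset.1 hsub
    exact ⟨Pi.single i 1, by simp [coordSumHom_apply, sum_pi_single', hi₁, hi₂]⟩

theorem coordSumHom_prod_surjective [Ring R] {T₁ T₂ : Finset ι} (h₁ : T₁.Nonempty)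
    (h₂ : T₂.Nonempty) (hne : T₁ ≠ T₂) :
    Surjective ((coordSumHom T₁).prod (coordSumHom T₂) : (ι → R) →+ R × R) := by
  obtain ⟨e₁, he₁₁, he₁₂⟩ := exists_coordSumHom_eq_one_and_eq_zero (R := R) h₁ hne
  obtain ⟨e₂, he₂₂, he₂₁⟩ := exists_coordSumHom_eq_one_and_eq_zero (R := R) h₂ hne.symm
  rintro ⟨u, v⟩
  refine ⟨u • e₁ + v • e₂, ?_⟩
  simp only [coordSumHom_apply, AddMonoidHom.prod_apply] at *
  simp [sum_add_distrib, ← mul_sum, he₁₁, he₁₂, he₂₁, he₂₂]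

variable [Fintype ι]

theorem two_mul_card_filter_eq_coordSum {T : Finset ι} (hT : T.Nonempty) (a : ZMod 2) :
    2 * #{b : ι → ZMod 2 | a = ∑ i ∈ T, b i} = 2 ^ Fintype.card ι := by
  simpa [coordSumHom_apply, eq_comm] using
    (coordSumHom T).card_mul_card_fiber_of_surjective (coordSumHom_surjective hT) a

theorem four_mul_card_filter_eq_coordSum_and {T₁ T₂ : Finset ι} (h₁ : T₁.Nonempty)
    (h₂ : T₂.Nonempty) (hne : T₁ ≠ T₂) (a₁ a₂ : ZMod 2) :
    4 * #{b : ι → ZMod 2 | a₁ = ∑ i ∈ T₁, b i ∧ a₂ = ∑ i ∈ T₂, b i} =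
      2 ^ Fintype.card ι := by
  have := ((coordSumHom T₁).prod (coordSumHom T₂)).card_mul_card_fiber_of_surjective
    (coordSumHom_prod_surjective h₁ h₂ hne) (a₁, a₂)
  simpa [coordSumHom_apply, Prod.ext_iff, eq_comm] using this

end CoordSum

theorem stmt_9_general {X : Type*} [Fintype X] [DecidableEq X]
    (k : ℕ)
    (S : X → Finset (Fin k)) (hSinj : Function.Injective S)
    (hSne : ∀ x, (S x).Nonempty) :
    Fintype.card X ≤ 2 ^ k - 1 ∧
    ∀ (x₁ x₂ : X) (a₁ a₂ : ZMod 2),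
      (1 / (2 ^ k : ℝ)) * ∑ b : Fin k → ZMod 2,
          (if a₁ = ∑ i ∈ S x₁, b i then (1 : ℝ) else 0) *
          (if a₂ = ∑ i ∈ S x₂, b i then (1 : ℝ) else 0) =
        if x₁ = x₂ then (if a₁ = a₂ then 1 / 2 else 0) else 1 / 4 := by
  refine ⟨by simpa using card_le_two_pow_sub_one_of_injective hSinj hSne,
    fun x₁ x₂ a₁ a₂ => ?_⟩
  simp only [ite_zero_mul_ite_zero, mul_one, sum_boole]
  split_ifs with hx ha
  · subst hx ha
    have hcount := two_mul_card_filter_eq_coordSum (hSne x₁) a₁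
    simp only [and_self]
    rw [Fintype.card_fin] at hcount
    field_simp
    rw [mul_comm]
    exact_mod_cast hcount
  · subst hx
    have hempty : ({b : Fin k → ZMod 2 | a₁ = ∑ i ∈ S x₁, b i ∧ a₂ = ∑ i ∈ S x₁, b i} :
        Finset _) = ∅ :=
      filter_false_of_mem fun b _ ⟨h₁, h₂⟩ => ha (h₁.trans h₂.symm)
    simp [hempty]
  · have hcount := four_mul_card_filter_eq_coordSum_and (hSne x₁) (hSne x₂)
      (hSinj.ne hx) a₁ a₂
    rw [Fintype.card_fin] at hcount
    field_simp
    rw [mul_comm]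
    exact_mod_cast hcount

/-- with `k = ⌈log₂(|X|+1)⌉` (so `|X| ≤ 2^k − 1`), a uniformly random
bit string `b ∈ {0,1}^k` and the XOR strategy `x ↦ ⊕_{i ∈ S_x} b_i` (for an injection
`x ↦ S_x` into nonempty subsets of `{1,…,k}`) exactly generate the distribution that is
`1/2` when `a₁ = a₂, x₁ = x₂`, `0` when `a₁ ≠ a₂, x₁ = x₂`, and `1/4` when `x₁ ≠ x₂`;
hence a source of cardinality `2^⌈log₂(|X|+1)⌉` suffices. -/
theorem stmt_9 {X : Type*} [Fintype X] [Nonempty X] [DecidableEq X]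
    (k : ℕ) (hk : k = Nat.clog 2 (Fintype.card X + 1))
    (S : X → Finset (Fin k)) (hSinj : Function.Injective S)
    (hSne : ∀ x, (S x).Nonempty) :
    Fintype.card X ≤ 2 ^ k - 1 ∧
    ∀ (x₁ x₂ : X) (a₁ a₂ : ZMod 2),
      (1 / (2 ^ k : ℝ)) * ∑ b : Fin k → ZMod 2,
          (if a₁ = ∑ i ∈ S x₁, b i then (1 : ℝ) else 0) *
          (if a₂ = ∑ i ∈ S x₂, b i then (1 : ℝ) else 0) =
        if x₁ = x₂ then (if a₁ = a₂ then 1 / 2 else 0) else 1 / 4 :=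
  stmt_9_general k S hSinj hSne
end

section
/- Let m ≥ 1 and let p₁,…,p_m be positive reals with ∑_{i=1}^m pᵢ = 1, and define the inner product ⟨x,y⟩_p = ∑_{i=1}^m pᵢ·xᵢ·yᵢ on ℝ^m. Let n ≥ 1 and let u₁,…,u_n ∈ {0,1}^m be vectors satisfying ⟨u_x, u_y⟩_p = 1/2 if x = y and ⟨u_x, u_y⟩_p = 1/4 if x ≠ y, and ⟨u_x, 𝟏⟩_p = 1/2 for all x, where 𝟏 is the all-ones vector. Then m ≥ n + 1. -/
/-!
The centered vectors `u_x - 𝟏/2` are pairwise orthogonal for `⟨·,·⟩_p` and orthogonal to `𝟏`,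
and none of these `n + 1` vectors is isotropic. Rescaling coordinate `i` by `√pᵢ` turns
`⟨·,·⟩_p` into the Euclidean inner product, so they are linearly independent in `ℝ^m`.
-/

open Finset

noncomputable def weightedEmbed {ι : Type*} (p v : ι → ℝ) : EuclideanSpace ℝ ι :=
  WithLp.toLp 2 fun i => √(p i) * v i

theorem inner_weightedEmbed {ι : Type*} [Fintype ι] {p : ι → ℝ} (hp : ∀ i, 0 ≤ p i)
    (v w : ι → ℝ) :
    inner ℝ (weightedEmbed p v) (weightedEmbed p w) = ∑ i, p i * v i * w i := by
  simp only [weightedEmbed, PiLp.inner_apply, RCLike.inner_apply, conj_trivial]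
  refine sum_congr rfl fun i _ => ?_
  linear_combination (v i * w i) * Real.mul_self_sqrt (hp i)

theorem card_le_of_weighted_orthogonal {ι κ : Type*} [Fintype ι] [Fintype κ] {p : ι → ℝ}
    (hp : ∀ i, 0 ≤ p i) (v : κ → ι → ℝ)
    (h_ne : ∀ k, ∑ i, p i * v k i * v k i ≠ 0)
    (h_ortho : Pairwise fun k l => ∑ i, p i * v k i * v l i = 0) :
    Fintype.card κ ≤ Fintype.card ι := by
  have h_indep : LinearIndependent ℝ fun k => weightedEmbed p (v k) := by
    refine linearIndependent_of_ne_zero_of_inner_eq_zero (fun k hk => h_ne k ?_) ?_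
    · rw [← inner_weightedEmbed hp, hk, inner_zero_left]
    · intro k l hkl
      rw [inner_weightedEmbed hp, h_ortho hkl]
  simpa using h_indep.fintype_card_le_finrank

section Centering

variable {ι : Type*} [Fintype ι] {p a b : ι → ℝ}

theorem weighted_sum_sub_half (hp1 : ∑ i, p i = 1) (ha : ∑ i, p i * a i = 1 / 2) :
    ∑ i, p i * (a i - 1 / 2) = 0 := by
  simp only [mul_sub, sum_sub_distrib, ← sum_mul, ha, hp1]
  norm_num

theorem weighted_inner_sub_half (hp1 : ∑ i, p i = 1) (ha : ∑ i, p i * a i = 1 / 2)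
    (hb : ∑ i, p i * b i = 1 / 2) :
    ∑ i, p i * (a i - 1 / 2) * (b i - 1 / 2) = ∑ i, p i * a i * b i - 1 / 4 := by
  have h_expand : ∀ i, p i * (a i - 1 / 2) * (b i - 1 / 2)
      = p i * a i * b i - 1 / 2 * (p i * a i) - 1 / 2 * (p i * b i) + 1 / 4 * p i := by
    intro i; ring
  simp only [h_expand, sum_add_distrib, sum_sub_distrib, ← mul_sum, ha, hb, hp1]
  ring

end Centering

theorem stmt_12_general (m : ℕ)
    (p : Fin m → ℝ) (hp : ∀ i, 0 < p i) (hp1 : ∑ i, p i = 1)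
    (n : ℕ)
    (u : Fin n → Fin m → ℝ)
    (huu : ∀ x y, ∑ i, p i * u x i * u y i = if x = y then 1 / 2 else 1 / 4)
    (hu1 : ∀ x, ∑ i, p i * u x i * 1 = 1 / 2) :
    m ≥ n + 1 := by
  simp only [mul_one] at hu1
  let v : Fin (n + 1) → Fin m → ℝ := Fin.cons (fun _ => 1) fun x i => u x i - 1 / 2
  have h_centered (x y : Fin n) :
      ∑ i, p i * (u x i - 1 / 2) * (u y i - 1 / 2) = if x = y then 1 / 4 else 0 := by
    rw [weighted_inner_sub_half hp1 (hu1 x) (hu1 y), huu]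
    split_ifs <;> norm_num
  have h_card := card_le_of_weighted_orthogonal (fun i => (hp i).le) v ?_ ?_
  · simpa using h_card
  · refine Fin.cases ?_ fun x => ?_
    · simp [v, hp1]
    · simp only [v, Fin.cons_succ, h_centered]
      norm_num
  · refine Fin.cases (Fin.cases ?_ fun y _ => ?_) fun x => Fin.cases (fun _ => ?_) fun y hxy => ?_
    · exact fun h => absurd rfl h
    · simpa [v] using weighted_sum_sub_half hp1 (hu1 y)
    · simpa [v] using weighted_sum_sub_half hp1 (hu1 x)
    · simp only [v, Fin.cons_succ, h_centered, if_neg (mt (congrArg Fin.succ) hxy)]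

/-- for positive weights `p` summing to 1 and binary vectors `u_x` with
`⟨u_x,u_y⟩_p = 1/2` if `x = y`, `1/4` if `x ≠ y`, and `⟨u_x,𝟏⟩_p = 1/2`, one must have
`m ≥ n + 1`. -/
theorem stmt_12 (m : ℕ) (hm : 1 ≤ m)
    (p : Fin m → ℝ) (hp : ∀ i, 0 < p i) (hp1 : ∑ i, p i = 1)
    (n : ℕ) (hn : 1 ≤ n)
    (u : Fin n → Fin m → ℝ) (hu : ∀ x i, u x i = 0 ∨ u x i = 1)
    (huu : ∀ x y, ∑ i, p i * u x i * u y i = if x = y then 1 / 2 else 1 / 4)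
    (hu1 : ∀ x, ∑ i, p i * u x i * 1 = 1 / 2) :
    m ≥ n + 1 :=
  stmt_12_general m p hp hp1 n u huu hu1
end
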